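/- arXiv:math/0306119 — 4 statements merged into one kernel-verified Lean document; each statement's English description precedes it below -/
import Mathlib

section
/- Let n ≥ 2r and let 𝒜 ⊆ [n]^(r) be an intersecting family that is maximal. Then for every A, B ∈ 𝒜 one has A ∩ B ∩ 𝒜⟨1⟩ ≠ ∅, i.e. A and B share a point x such that {x} = A' ∩ B' for some A', B' ∈ 𝒜. -/
open Finset

/-- The ground set `[n] = {1, …, n}`. -/
def grd (n : ℕ) : Finset ℕ := Finset.Icc 1 n

/-- `[n]^(k)`: all `k`-element subsets of `[n]`. -/
def ksets (n k : ℕ) : Finset (Finset ℕ) := (grd n).powersetCard k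

/-- A family of sets is intersecting if any two of its members meet. -/
def IsIntersecting (𝒜 : Finset (Finset ℕ)) : Prop :=
  ∀ A ∈ 𝒜, ∀ B ∈ 𝒜, (A ∩ B).Nonempty

/-- `𝒜⟨k⟩`: the collection of `k`-sets arising as pairwise intersections of members of `𝒜`. -/
def interk (𝒜 : Finset (Finset ℕ)) (k : ℕ) : Finset (Finset ℕ) :=
  ((𝒜 ×ˢ 𝒜).image fun p => p.1 ∩ p.2).filter fun C => C.card = k

/-- `𝒜⟨1⟩` identified with a set of points: all `x` with `{x} = A ∩ B` for some `A, B ∈ 𝒜`. -/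
def interPts (𝒜 : Finset (Finset ℕ)) : Finset ℕ :=
  (interk 𝒜 1).sup id

/-- `β(n,r,k)`: the maximum of `|𝒜⟨k⟩|` over intersecting families `𝒜 ⊆ [n]^(r)`. -/
noncomputable def beta (n r k : ℕ) : ℕ :=
  sSup {m | ∃ 𝒜 ⊆ ksets n r, IsIntersecting 𝒜 ∧ (interk 𝒜 k).card = m}

/-- `α^(r) = max {β(n,r,1) : n ≥ r}` (finite by Lovász's theorem). -/
noncomputable def alpha (r : ℕ) : ℕ :=
  sSup {m | ∃ n, r ≤ n ∧ beta n r 1 = m}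

/-- Lemma 1 (maximality lemma): if `n ≥ 2r` and `𝒜 ⊆ [n]^(r)` is intersecting and maximal,
then any two members of `𝒜` share a point lying in `𝒜⟨1⟩`. -/
theorem stmt_0 (n r : ℕ) (hn : 2 * r ≤ n) (𝒜 : Finset (Finset ℕ))
    (h𝒜 : 𝒜 ⊆ ksets n r) (hint : IsIntersecting 𝒜)
    (hmax : ∀ B ∈ ksets n r, B ∉ 𝒜 → ∃ A ∈ 𝒜, A ∩ B = ∅) :
    ∀ A ∈ 𝒜, ∀ B ∈ 𝒜, (A ∩ B ∩ interPts 𝒜).Nonempty := by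
  intro A hA B hB
  have hcard : ∀ C ∈ 𝒜, C ⊆ grd n ∧ C.card = r := fun C hC => by
    have := h𝒜 hC; rwa [ksets, Finset.mem_powersetCard] at this
  set T := (𝒜 ×ˢ 𝒜).filter (fun p => p.1 ∩ p.2 ⊆ A ∩ B) with hT
  have hABT : (A, B) ∈ T := by
    simp [hT, Finset.mem_filter, Finset.mem_product, hA, hB]
  obtain ⟨p, hpT, hpmin⟩ := Finset.exists_min_image T (fun p => (p.1 ∩ p.2).card) ⟨_, hABT⟩
  obtain ⟨C, D⟩ := p
  rw [hT, Finset.mem_filter, Finset.mem_product] at hpT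
  obtain ⟨⟨hC, hD⟩, hsub⟩ := hpT
  set S := C ∩ D with hS
  have hSne : S.Nonempty := hint C hC D hD
  have hs1 : S.card = 1 := by
    by_contra hne
    have hs2 : 2 ≤ S.card := by
      have := Finset.card_pos.mpr hSne; omega
    obtain ⟨x, hx⟩ := hSne
    have hScd : S.card = (C ∩ D).card := rfl
    have hCg := hcard C hC
    have hDg := hcard D hD
    have hu : (C ∪ D).card + S.card = 2 * r := by
      have := Finset.card_union_add_card_inter C D
      rw [hCg.2, hDg.2] at this; omega
    have houtcard : S.card - 1 ≤ (grd n \ (C ∪ D)).card := by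
      rw [Finset.card_sdiff_of_subset (Finset.union_subset hCg.1 hDg.1)]
      have : (grd n).card = n := by simp [grd]
      omega
    obtain ⟨G, hGsub, hGcard⟩ := Finset.exists_subset_card_eq houtcard
    set E := insert x ((C \ S) ∪ G) with hE
    have hxC : x ∈ C := (Finset.mem_inter.mp hx).1
    have hxD : x ∈ D := (Finset.mem_inter.mp hx).2
    have hGout : ∀ y ∈ G, y ∉ C ∪ D := fun y hy =>
      (Finset.mem_sdiff.mp (hGsub hy)).2
    have hdisj : Disjoint (C \ S) G := by
      rw [Finset.disjoint_right]
      intro y hy hyc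
      exact hGout y hy (Finset.mem_union_left _ (Finset.mem_sdiff.mp hyc).1)
    have hxnot : x ∉ (C \ S) ∪ G := by
      intro h
      rcases Finset.mem_union.mp h with h | h
      · exact (Finset.mem_sdiff.mp h).2 hx
      · exact hGout x h (Finset.mem_union_left _ hxC)
    have hsr : S.card ≤ r := by
      rw [← hCg.2]; exact Finset.card_le_card Finset.inter_subset_left
    have hEcard : E.card = r := by
      rw [hE, Finset.card_insert_of_notMem hxnot,
        Finset.card_union_of_disjoint hdisj,
        Finset.card_sdiff_of_subset Finset.inter_subset_left, hCg.2, hGcard]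
      omega

    have hEg : E ⊆ grd n := by
      intro y hy
      rcases Finset.mem_insert.mp hy with rfl | hy
      · exact hCg.1 hxC
      rcases Finset.mem_union.mp hy with hy | hy
      · exact hCg.1 (Finset.mem_sdiff.mp hy).1
      · exact (Finset.mem_sdiff.mp (hGsub hy)).1
    have hED : E ∩ D = {x} := by
      ext y
      simp only [Finset.mem_inter, Finset.mem_singleton, hE, Finset.mem_insert,
        Finset.mem_union, Finset.mem_sdiff]
      constructor
      · rintro ⟨rfl | hy | hy, hyD⟩
        · rfl
        · exact absurd (Finset.mem_inter.mpr ⟨hy.1, hyD⟩) hy.2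
        · exact absurd (Finset.mem_union_right _ hyD) (hGout y hy)
      · rintro rfl; exact ⟨Or.inl rfl, hxD⟩
    by_cases hEA : E ∈ 𝒜
    · have hmemT : (E, D) ∈ T := by
        rw [hT, Finset.mem_filter, Finset.mem_product]
        refine ⟨⟨hEA, hD⟩, ?_⟩
        rw [hED]
        intro y hy
        rw [Finset.mem_singleton] at hy; subst hy
        exact hsub hx
      have hmin := hpmin _ hmemT
      rw [hED] at hmin
      simp only [Finset.card_singleton] at hmin
      omega
    · obtain ⟨F, hF, hFE⟩ := hmax E (by rw [ksets, Finset.mem_powersetCard]; exact ⟨hEg, hEcard⟩) hEA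
      have hFC : F ∩ C ⊆ S.erase x := by
        intro y hy
        obtain ⟨hyF, hyC⟩ := Finset.mem_inter.mp hy
        have hyE : y ∉ E := fun h =>
          Finset.notMem_empty y (hFE ▸ Finset.mem_inter.mpr ⟨hyF, h⟩)
        have hyS : y ∈ S := by
          by_contra h
          exact hyE (Finset.mem_insert_of_mem (Finset.mem_union_left _
            (Finset.mem_sdiff.mpr ⟨hyC, h⟩)))
        refine Finset.mem_erase.mpr ⟨?_, hyS⟩
        rintro rfl; exact hyE (Finset.mem_insert_self _ _)
      have hmemT : (F, C) ∈ T := by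
        rw [hT, Finset.mem_filter, Finset.mem_product]
        exact ⟨⟨hF, hC⟩, (hFC.trans (Finset.erase_subset _ _)).trans hsub⟩
      have hmin := hpmin _ hmemT
      have hle : (F ∩ C).card ≤ S.card - 1 := by
        have := Finset.card_le_card hFC
        rwa [Finset.card_erase_of_mem hx] at this
      simp only at hmin
      omega
  obtain ⟨x, hxS⟩ := Finset.card_eq_one.mp hs1
  refine ⟨x, ?_⟩
  rw [Finset.mem_inter]
  constructor
  · exact hsub (hxS ▸ Finset.mem_singleton_self x)
  · rw [interPts, Finset.mem_sup]
    refine ⟨S, ?_, hxS ▸ Finset.mem_singleton_self x⟩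
    rw [interk, Finset.mem_filter, Finset.mem_image]
    exact ⟨⟨(C, D), Finset.mem_product.mpr ⟨hC, hD⟩, rfl⟩, hs1⟩
end

section
/- Fix 1 ≤ k ≤ r. There exists n₀ such that for all n ≥ n₀ the following holds: if ℬ ⊆ [n]^(r−k+1) is an intersecting family with ℬ⟨1⟩ = [α^(r−k+1)] (the first α^(r−k+1) points of [n]), and 𝒜 = {A ∈ [n]^(r) : there exists B ∈ ℬ with B ⊆ A}, then 𝒜 is intersecting and 𝒜⟨k⟩ = {C ∈ [n]^(k) : C ∩ [α^(r−k+1)] ≠ ∅}. -/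
open Finset

/-!
Since every member of `𝒜` contains a member of `ℬ`, each intersection `A ∩ A'` contains some
`B ∩ B'`. The heart of the matter is that when `ℬ` attains the maximum `α^(m)` (`m = r - k + 1`)
of singleton intersections, every `B ∩ B'` contains a singleton-intersection point; finiteness of
`α^(m)` is Lovász's theorem, derived from the Erdős–Rado sunflower lemma. Conversely a `k`-set
`C` through a point `{x} = B ∩ B'` is `A ∩ A'` for suitable paddings `A ⊇ B ∪ C`, `A' ⊇ B' ∪ C`.
-/

open scoped Nat

section Sunflower

variable {α : Type*} [DecidableEq α]

def IsSunflower (S : Finset (Finset α)) (E : Finset α) : Prop :=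
  (S : Set (Finset α)).Pairwise fun X Y => X ∩ Y = E

def HasSunflower (F : Finset (Finset α)) (p : ℕ) : Prop :=
  ∃ S ⊆ F, S.card = p ∧ ∃ E, IsSunflower S E

lemma IsSunflower.kernel_subset {S : Finset (Finset α)} {E X : Finset α} (h : IsSunflower S E)
    (hS : 1 < S.card) (hX : X ∈ S) : E ⊆ X := by
  obtain ⟨Y, hY, hYX⟩ := exists_mem_ne hS X
  rw [← h hX hY hYX.symm]
  exact inter_subset_left

/-- The traces of `B` on the petals are disjoint once `B` misses the kernel. -/
lemma IsSunflower.inter_kernel_nonempty {S : Finset (Finset α)} {E B : Finset α}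
    (h : IsSunflower S E) (hB : B.card < S.card) (hmeet : ∀ X ∈ S, (B ∩ X).Nonempty) :
    (B ∩ E).Nonempty := by
  by_contra hBE
  rw [not_nonempty_iff_eq_empty] at hBE
  have hdisj : (S : Set (Finset α)).PairwiseDisjoint (B ∩ ·) := fun X hX Y hY hXY => by
    rw [Function.onFun, disjoint_iff_inter_eq_empty, inter_inter_inter_comm, inter_self,
      h hX hY hXY, hBE]
  have := (card_le_card_biUnion hdisj hmeet).trans
    (card_le_card (biUnion_subset.2 fun X _ => inter_subset_left))
  omega

lemma hasSunflower_of_pairwiseDisjoint {F S : Finset (Finset α)} (hSF : S ⊆ F)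
    (hS : (S : Set (Finset α)).PairwiseDisjoint id) : HasSunflower F S.card :=
  ⟨S, hSF, rfl, ∅, fun _ hX _ hY hXY => disjoint_iff_inter_eq_empty.1 (hS hX hY hXY)⟩

lemma IsSunflower.image_insert {S : Finset (Finset α)} {E : Finset α} (h : IsSunflower S E)
    (y : α) : IsSunflower (S.image (insert y)) (insert y E) := by
  intro A hA A' hA' hAA'
  simp only [coe_image, Set.mem_image, mem_coe] at hA hA'
  obtain ⟨X, hX, rfl⟩ := hA
  obtain ⟨X', hX', rfl⟩ := hA'
  rw [← insert_inter_distrib, h hX hX' fun hXX' => hAA' (hXX' ▸ rfl)]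

lemma HasSunflower.of_link {F : Finset (Finset α)} {p : ℕ} {y : α}
    (h : HasSunflower ((F.filter (y ∈ ·)).image (·.erase y)) p) : HasSunflower F p := by
  obtain ⟨S, hSG, rfl, E, hE⟩ := h
  have hyS : ∀ X ∈ S, insert y X ∈ F ∧ y ∉ X := fun X hX => by
    obtain ⟨A, hA, rfl⟩ := mem_image.1 (hSG hX)
    rw [mem_filter] at hA
    exact ⟨by rw [insert_erase hA.2]; exact hA.1, notMem_erase y A⟩
  refine ⟨S.image (insert y), image_subset_iff.2 fun X hX => (hyS X hX).1, ?_, _,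
    hE.image_insert y⟩
  refine card_image_of_injOn fun X hX X' hX' hXX' => ?_
  rw [← erase_insert (hyS X hX).2, ← erase_insert (hyS X' hX').2]
  exact congrArg (·.erase y) hXX'

/-- A maximal pairwise disjoint subfamily either has `p` members or its union meets every
member of `F`. -/
lemma hasSunflower_or_exists_transversal {F : Finset (Finset α)} {r : ℕ} (p : ℕ)
    (hF : ∀ A ∈ F, A.card = r) (hr : r ≠ 0) :
    HasSunflower F p ∨ ∃ U : Finset α, U.card ≤ (p - 1) * r ∧ ∀ A ∈ F, (A ∩ U).Nonempty := by
  classical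
  obtain ⟨M, hM, hMmax⟩ := exists_max_image
    (F.powerset.filter fun M : Finset (Finset α) => (M : Set (Finset α)).PairwiseDisjoint id)
    card
    ⟨∅, by simp⟩
  rw [mem_filter, mem_powerset] at hM
  by_cases hp : p ≤ M.card
  · obtain ⟨S, hSM, rfl⟩ := exists_subset_card_eq hp
    exact .inl (hasSunflower_of_pairwiseDisjoint (hSM.trans hM.1) (hM.2.subset hSM))
  refine .inr ⟨M.biUnion id, ?_, fun A hA => ?_⟩
  · calc (M.biUnion id).card ≤ ∑ X ∈ M, X.card := card_biUnion_le
      _ = M.card * r := sum_const_nat fun X hX => hF X (hM.1 hX)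
      _ ≤ (p - 1) * r := by gcongr; omega
  · by_contra hAU
    rw [not_nonempty_iff_eq_empty, ← disjoint_iff_inter_eq_empty, disjoint_biUnion_right] at hAU
    have hA₀ : A.Nonempty := card_pos.1 (by rw [hF A hA]; omega)
    have hAM : A ∉ M := fun hAM => hA₀.ne_empty (disjoint_self.1 (hAU A hAM))
    have hins := hMmax (insert A M) (by
      rw [mem_filter, mem_powerset, coe_insert]
      exact ⟨insert_subset hA hM.1, hM.2.insert fun X hX _ => hAU X hX⟩)
    rw [card_insert_of_notMem hAM] at hins
    omega

/-- The Erdős–Rado sunflower lemma. -/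
theorem hasSunflower_of_card_lt (p : ℕ) :
    ∀ (r : ℕ) (F : Finset (Finset α)), (∀ A ∈ F, A.card = r) →
      r ! * (p - 1) ^ r < F.card → HasSunflower F p
  | 0, F, hF, hcard => by
    have : F ⊆ {∅} := fun A hA => mem_singleton.2 (card_eq_zero.1 (hF A hA))
    have := card_le_card this
    simp at hcard this
    omega
  | r + 1, F, hF, hcard => by
    obtain h | ⟨U, hU, hFU⟩ := hasSunflower_or_exists_transversal p hF r.succ_ne_zero
    · exact h
    obtain ⟨y, -, hy⟩ : ∃ y ∈ U, r ! * (p - 1) ^ r < (F.filter (y ∈ ·)).card := by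
      refine exists_lt_of_sum_lt ?_
      calc ∑ _y ∈ U, r ! * (p - 1) ^ r = U.card * (r ! * (p - 1) ^ r) :=
            sum_const_nat fun _ _ => rfl
        _ ≤ (p - 1) * (r + 1) * (r ! * (p - 1) ^ r) := by gcongr
        _ = (r + 1)! * (p - 1) ^ (r + 1) := by rw [Nat.factorial_succ, pow_succ]; ring
        _ < F.card := hcard
        _ ≤ (U.biUnion fun y => F.filter (y ∈ ·)).card := card_le_card fun A hA => by
          obtain ⟨y, hy⟩ := hFU A hA
          exact mem_biUnion.2 ⟨y, (mem_inter.1 hy).2, mem_filter.2 ⟨hA, (mem_inter.1 hy).1⟩⟩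
        _ ≤ ∑ y ∈ U, (F.filter (y ∈ ·)).card := card_biUnion_le
    refine HasSunflower.of_link (y := y) (hasSunflower_of_card_lt p r _ ?_ ?_)
    · intro X hX
      obtain ⟨A, hA, rfl⟩ := mem_image.1 hX
      rw [mem_filter] at hA
      rw [card_erase_of_mem hA.2, hF A hA.1, Nat.add_sub_cancel]
    · rwa [card_image_of_injOn (s := F.filter (y ∈ ·)) fun A hA B hB =>
        erase_injOn' y (mem_filter.1 hA).2 (mem_filter.1 hB).2]

end Sunflower

section Intersections

variable {𝒜 ℬ : Finset (Finset ℕ)}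

lemma mem_interk {k : ℕ} {C : Finset ℕ} :
    C ∈ interk 𝒜 k ↔ (∃ A ∈ 𝒜, ∃ B ∈ 𝒜, A ∩ B = C) ∧ C.card = k := by
  simp only [interk, mem_filter, mem_image, mem_product, Prod.exists]
  tauto

lemma mem_interPts {x : ℕ} : x ∈ interPts 𝒜 ↔ ∃ A ∈ 𝒜, ∃ B ∈ 𝒜, A ∩ B = {x} := by
  simp only [interPts, mem_sup, id_eq, mem_interk, card_eq_one]
  constructor
  · rintro ⟨C, ⟨hC, y, rfl⟩, hx⟩
    rwa [mem_singleton.1 hx]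
  · exact fun h => ⟨{x}, ⟨h, x, rfl⟩, mem_singleton_self x⟩

lemma interk_one_eq_image_interPts : interk 𝒜 1 = (interPts 𝒜).image ({·}) := by
  ext C
  simp only [mem_image, mem_interPts, mem_interk, card_eq_one]
  constructor
  · rintro ⟨h, x, rfl⟩
    exact ⟨x, h, rfl⟩
  · rintro ⟨x, h, rfl⟩
    exact ⟨h, x, rfl⟩

lemma card_interk_one : (interk 𝒜 1).card = (interPts 𝒜).card := by
  rw [interk_one_eq_image_interPts, card_image_of_injective _ singleton_injective]

lemma interPts_mono (h : 𝒜 ⊆ ℬ) : interPts 𝒜 ⊆ interPts ℬ := fun x hx => by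
  obtain ⟨A, hA, B, hB, hAB⟩ := mem_interPts.1 hx
  exact mem_interPts.2 ⟨A, h hA, B, h hB, hAB⟩

lemma IsIntersecting.insert (h : IsIntersecting 𝒜) {D : Finset ℕ} (hD : D.Nonempty)
    (hD𝒜 : ∀ C ∈ 𝒜, (D ∩ C).Nonempty) : IsIntersecting (insert D 𝒜) := by
  intro X hX Y hY
  rw [mem_insert] at hX hY
  rcases hX with rfl | hX <;> rcases hY with rfl | hY
  · rwa [inter_self]
  · exact hD𝒜 Y hY
  · rw [inter_comm]
    exact hD𝒜 X hX
  · exact h X hX Y hY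

lemma IsIntersecting.of_forall_exists_subset (h : IsIntersecting ℬ)
    (h𝒜 : ∀ A ∈ 𝒜, ∃ B ∈ ℬ, B ⊆ A) : IsIntersecting 𝒜 := by
  intro A hA A' hA'
  obtain ⟨B, hB, hBA⟩ := h𝒜 A hA
  obtain ⟨B', hB', hBA'⟩ := h𝒜 A' hA'
  exact (h B hB B' hB').mono (inter_subset_inter hBA hBA')

/-- Lovász's theorem. Each set carries at most `m` of the points, and a sunflower with `m + 2`
petals among the carrying sets would force `m + 2` of the points into its kernel. -/
theorem card_interPts_le {m : ℕ} (hℬ : ∀ B ∈ ℬ, B.card = m) (hint : IsIntersecting ℬ) :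
    (interPts ℬ).card ≤ m * (m ! * (m + 1) ^ m) := by
  set P := interPts ℬ
  choose! A hA B hB hAB using fun x (hx : x ∈ P) => mem_interPts.1 hx
  have hxA : ∀ x ∈ P, x ∈ A x := fun x hx =>
    mem_of_mem_inter_left ((hAB x hx).symm ▸ mem_singleton_self x)
  have hPA : P.card ≤ m * (P.image A).card := card_le_mul_card_image P m fun X hX => by
    obtain ⟨x, hx, rfl⟩ := mem_image.1 hX
    refine (card_le_card fun z hz => ?_).trans (hℬ _ (hA x hx)).le
    obtain ⟨hzP, hzx⟩ := mem_filter.1 hz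
    exact hzx ▸ hxA z hzP
  refine hPA.trans (Nat.mul_le_mul_left m (not_lt.1 fun hbig => ?_))
  have hW : ∀ X ∈ P.image A, X ∈ ℬ := fun X hX => by
    obtain ⟨x, hx, rfl⟩ := mem_image.1 hX
    exact hA x hx
  obtain ⟨S, hSW, hScard, E, hE⟩ :=
    hasSunflower_of_card_lt (m + 2) m (P.image A) (fun X hX => hℬ X (hW X hX)) hbig
  have hS : 1 < S.card := by omega
  have hQE : P.filter (A · ∈ S) ⊆ E := fun x hx => by
    obtain ⟨hxP, hxS⟩ := mem_filter.1 hx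
    obtain ⟨e, he⟩ := hE.inter_kernel_nonempty (B := B x) (by rw [hℬ _ (hB x hxP)]; omega)
      fun X hX => hint _ (hB x hxP) X (hW X (hSW hX))
    have : e ∈ A x ∩ B x :=
      mem_inter.2 ⟨hE.kernel_subset hS hxS (mem_inter.1 he).2, (mem_inter.1 he).1⟩
    rw [hAB x hxP, mem_singleton] at this
    exact this ▸ (mem_inter.1 he).2
  have hSQ : S ⊆ (P.filter (A · ∈ S)).image A := fun X hX => by
    obtain ⟨x, hx, rfl⟩ := mem_image.1 (hSW hX)
    exact mem_image.2 ⟨x, mem_filter.2 ⟨hx, hX⟩, rfl⟩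
  obtain ⟨X, hX⟩ := card_pos.1 (by omega : 0 < S.card)
  have hEX := (card_le_card (hE.kernel_subset hS hX)).trans (hℬ X (hW X (hSW hX))).le
  have := ((card_le_card hSQ).trans card_image_le).trans (card_le_card hQE)
  omega

end Intersections

section Alpha

variable {n m : ℕ} {ℬ : Finset (Finset ℕ)}

lemma card_eq_of_mem_ksets {k : ℕ} {A : Finset ℕ} (hA : A ∈ ksets n k) : A.card = k :=
  (mem_powersetCard.1 hA).2

lemma lovasz_bound_mem_upperBounds (n m : ℕ) : m * (m ! * (m + 1) ^ m) ∈
    upperBounds {c | ∃ 𝒜 ⊆ ksets n m, IsIntersecting 𝒜 ∧ (interk 𝒜 1).card = c} := by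
  rintro c ⟨𝒜, hsub, hint, rfl⟩
  rw [card_interk_one]
  exact card_interPts_le (fun A hA => card_eq_of_mem_ksets (hsub hA)) hint

lemma beta_one_le (n m : ℕ) : beta n m 1 ≤ m * (m ! * (m + 1) ^ m) :=
  csSup_le ⟨0, ∅, empty_subset _, fun A hA => absurd hA (notMem_empty A), rfl⟩
    (lovasz_bound_mem_upperBounds n m)

lemma card_interPts_le_alpha (hsub : ℬ ⊆ ksets n m) (hint : IsIntersecting ℬ) :
    (interPts ℬ).card ≤ alpha m := by
  obtain rfl | ⟨B, hB⟩ := ℬ.eq_empty_or_nonempty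
  · simp [interPts, interk]
  have hmn : m ≤ n := by
    simpa [← card_eq_of_mem_ksets (hsub hB), grd] using
      card_le_card (mem_powersetCard.1 (hsub hB)).1
  calc (interPts ℬ).card = (interk ℬ 1).card := card_interk_one.symm
    _ ≤ beta n m 1 := le_csSup ⟨_, lovasz_bound_mem_upperBounds n m⟩ ⟨ℬ, hsub, hint, rfl⟩
    _ ≤ alpha m := le_csSup ⟨_, by rintro c ⟨n', -, rfl⟩; exact beta_one_le n' m⟩ ⟨n, hmn, rfl⟩

lemma erase_inter_nonempty_of_notMem_interPts (hint : IsIntersecting ℬ) {B C : Finset ℕ}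
    (hB : B ∈ ℬ) (hC : C ∈ ℬ) {q : ℕ} (hq : q ∉ interPts ℬ) : (B.erase q ∩ C).Nonempty := by
  rw [nonempty_iff_ne_empty, erase_inter, Ne, erase_eq_empty_iff, not_or]
  exact ⟨(hint B hB C hC).ne_empty, fun h => hq (mem_interPts.2 ⟨B, hB, C, hC, h⟩)⟩

/-- If `B ∩ B'` missed `interPts ℬ`, trading a point `q ∈ B ∩ B'` of `B` for a fresh point
keeps the family intersecting (as `q` is not a singleton intersection) without creating new
singleton intersections (by maximality), while shrinking `B ∩ B'`. -/
theorem inter_inter_interPts_nonempty (hsub : ℬ ⊆ ksets n m) (hint : IsIntersecting ℬ)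
    (hmax : alpha m ≤ (interPts ℬ).card) {B B' : Finset ℕ} (hB : B ∈ ℬ) (hB' : B' ∈ ℬ) :
    (B ∩ B' ∩ interPts ℬ).Nonempty := by
  obtain ⟨s, hs⟩ : ∃ s, (B ∩ B').card = s := ⟨_, rfl⟩
  induction s using Nat.strong_induction_on generalizing n ℬ B with
  | _ s ih =>
  by_contra hdisj
  rw [not_nonempty_iff_eq_empty, ← disjoint_iff_inter_eq_empty] at hdisj
  obtain ⟨q, hq⟩ := hint B hB B' hB'
  have hqP : q ∉ interPts ℬ := disjoint_left.1 hdisj hq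
  have hfresh : ∀ C ∈ ℬ, n + 1 ∉ C := fun C hC h => by
    simpa [grd] using (mem_powersetCard.1 (hsub hC)).1 h
  set D := insert (n + 1) (B.erase q)
  have hsub₁ : insert D ℬ ⊆ ksets (n + 1) m := by
    refine insert_subset (mem_powersetCard.2 ⟨insert_subset (by simp [grd]) ?_, ?_⟩) ?_
    · exact (erase_subset q B).trans ((mem_powersetCard.1 (hsub hB)).1.trans
        (Icc_subset_Icc_right n.le_succ))
    · rw [card_insert_of_notMem fun h => hfresh B hB (mem_of_mem_erase h),
        card_erase_add_one (mem_inter.1 hq).1, card_eq_of_mem_ksets (hsub hB)]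
    · exact fun C hC => powersetCard_mono (Icc_subset_Icc_right n.le_succ) (hsub hC)
  have hint₁ : IsIntersecting (insert D ℬ) := hint.insert (insert_nonempty _ _) fun C hC =>
    (erase_inter_nonempty_of_notMem_interPts hint hB hC hqP).mono
      (inter_subset_inter_right (subset_insert _ _))
  have hpts : interPts (insert D ℬ) = interPts ℬ :=
    (eq_of_subset_of_card_le (interPts_mono (subset_insert D ℬ))
      ((card_interPts_le_alpha hsub₁ hint₁).trans hmax)).symm
  have hDB' : D ∩ B' = (B ∩ B').erase q := by
    rw [insert_inter_of_notMem (hfresh B' hB'), erase_inter]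
  obtain ⟨x, hx⟩ := ih (s - 1) (by have := card_pos.2 ⟨q, hq⟩; omega) hsub₁ hint₁
    (hpts ▸ hmax) (mem_insert_self D ℬ) (mem_insert_of_mem hB')
    (by rw [hDB', card_erase_of_mem hq, hs])
  rw [hDB', hpts, mem_inter] at hx
  exact disjoint_left.1 hdisj (mem_of_mem_erase hx.1) hx.2

end Alpha

lemma exists_supersets_inter_eq {α : Type*} [DecidableEq α] {G X X' : Finset α} {r : ℕ}
    (hX : X ⊆ G) (hX' : X' ⊆ G) (hXr : X.card ≤ r) (hX'r : X'.card ≤ r) (hG : 4 * r ≤ G.card) :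
    ∃ A ∈ G.powersetCard r, ∃ A' ∈ G.powersetCard r, X ⊆ A ∧ X' ⊆ A' ∧ A ∩ A' = X ∩ X' := by
  set pool := G \ (X ∪ X')
  have hpool : 2 * r ≤ pool.card := by
    rw [card_sdiff_of_subset (union_subset hX hX')]
    have := card_union_le X X'
    omega
  obtain ⟨P, hP, hPcard⟩ := exists_subset_card_eq (show r - X.card ≤ pool.card by omega)
  obtain ⟨P', hP', hP'card⟩ := exists_subset_card_eq
    (show r - X'.card ≤ (pool \ P).card by rw [card_sdiff_of_subset hP]; omega)
  have hPmem : ∀ z ∈ P, z ∈ G ∧ z ∉ X ∧ z ∉ X' := fun z hz => by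
    simpa [pool, not_or] using hP hz
  have hP'mem : ∀ z ∈ P', (z ∈ G ∧ z ∉ X ∧ z ∉ X') ∧ z ∉ P := fun z hz => by
    simpa [pool, not_or] using hP' hz
  refine ⟨X ∪ P, mem_powersetCard.2 ⟨union_subset hX fun z hz => (hPmem z hz).1, ?_⟩,
    X' ∪ P', mem_powersetCard.2 ⟨union_subset hX' fun z hz => (hP'mem z hz).1.1, ?_⟩,
    subset_union_left, subset_union_left, ?_⟩
  · rw [card_union_of_disjoint (disjoint_right.2 fun z hz => (hPmem z hz).2.1)]
    omega
  · rw [card_union_of_disjoint (disjoint_right.2 fun z hz => (hP'mem z hz).1.2.2)]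
    omega
  · ext z
    have := hPmem z
    have := hP'mem z
    simp only [mem_inter, mem_union]
    tauto

section Extension

variable {n k r : ℕ} {ℬ : Finset (Finset ℕ)} {P : Finset ℕ}

lemma interk_filter_subset (hmeet : ∀ B ∈ ℬ, ∀ B' ∈ ℬ, (B ∩ B' ∩ P).Nonempty) :
    interk ((ksets n r).filter fun A => ∃ B ∈ ℬ, B ⊆ A) k ⊆
      (ksets n k).filter fun C => (C ∩ P).Nonempty := by
  intro C hC
  obtain ⟨⟨A, hA, A', hA', rfl⟩, hk⟩ := mem_interk.1 hC
  obtain ⟨hAn, B, hB, hBA⟩ := mem_filter.1 hA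
  obtain ⟨-, B', hB', hBA'⟩ := mem_filter.1 hA'
  refine mem_filter.2 ⟨mem_powersetCard.2 ⟨inter_subset_left.trans ?_, hk⟩, ?_⟩
  · exact (mem_powersetCard.1 hAn).1
  · exact (hmeet B hB B' hB').mono (inter_subset_inter_right (inter_subset_inter hBA hBA'))

/-- Pad `B ∪ C` and `B' ∪ C` with disjoint sets of fresh points, where `B ∩ B' = {x}` and
`x ∈ C`; each union has at most `m + k - 1 = r` points. -/
lemma filter_subset_interk {m : ℕ} (hsub : ℬ ⊆ ksets n m) (hmk : m + k = r + 1)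
    (hn : 4 * r ≤ n) :
    (ksets n k).filter (fun C => (C ∩ interPts ℬ).Nonempty) ⊆
      interk ((ksets n r).filter fun A => ∃ B ∈ ℬ, B ⊆ A) k := by
  intro C hC
  obtain ⟨hCn, x, hx⟩ := mem_filter.1 hC
  obtain ⟨hxC, hxP⟩ := mem_inter.1 hx
  obtain ⟨B, hB, B', hB', hBB'⟩ := mem_interPts.1 hxP
  obtain ⟨hCG, hCk⟩ := mem_powersetCard.1 hCn
  have hcard : ∀ B ∈ ℬ, x ∈ B → B ∪ C ⊆ grd n ∧ (B ∪ C).card ≤ r := fun B hB hxB => by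
    obtain ⟨hBG, hBm⟩ := mem_powersetCard.1 (hsub hB)
    refine ⟨union_subset hBG hCG, ?_⟩
    have := card_union_add_card_inter B C
    have := card_pos.2 ⟨x, mem_inter.2 ⟨hxB, hxC⟩⟩
    omega
  have hxBB' := mem_inter.1 (hBB' ▸ mem_singleton_self x)
  obtain ⟨hX, hXr⟩ := hcard B hB hxBB'.1
  obtain ⟨hX', hX'r⟩ := hcard B' hB' hxBB'.2
  obtain ⟨A, hA, A', hA', hBA, hBA', hAA'⟩ :=
    exists_supersets_inter_eq hX hX' hXr hX'r (by simpa [grd] using hn)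
  refine mem_interk.2 ⟨⟨A, mem_filter.2 ⟨hA, B, hB, subset_union_left.trans hBA⟩,
    A', mem_filter.2 ⟨hA', B', hB', subset_union_left.trans hBA'⟩, ?_⟩, hCk⟩
  rw [hAA', ← inter_union_distrib_right, hBB', union_eq_right.2 (singleton_subset_iff.2 hxC)]

end Extension

theorem stmt_1_general (k r : ℕ) (hkr : k ≤ r) :
    ∃ n₀ : ℕ, ∀ n, n₀ ≤ n → ∀ ℬ ⊆ ksets n (r - k + 1),
      IsIntersecting ℬ →
      interPts ℬ = Finset.Icc 1 (alpha (r - k + 1)) →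
      IsIntersecting ((ksets n r).filter fun A => ∃ B ∈ ℬ, B ⊆ A) ∧
      interk ((ksets n r).filter fun A => ∃ B ∈ ℬ, B ⊆ A) k =
        (ksets n k).filter fun C => (C ∩ Finset.Icc 1 (alpha (r - k + 1))).Nonempty := by
  refine ⟨4 * r, fun n hn ℬ hsub hint hpts => ⟨?_, ?_⟩⟩
  · exact hint.of_forall_exists_subset fun A hA => (mem_filter.1 hA).2
  have hmax : alpha (r - k + 1) ≤ (interPts ℬ).card := by simp [hpts]
  rw [← hpts]
  exact (interk_filter_subset fun B hB B' hB' =>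
    inter_inter_interPts_nonempty hsub hint hmax hB hB').antisymm
    (filter_subset_interk hsub (by omega) hn)

/-- Construction 1: extending an intersecting family `ℬ ⊆ [n]^(r-k+1)` with
`ℬ⟨1⟩ = [α^(r-k+1)]` to all `r`-sets containing a member gives an intersecting family whose
`k`-intersections are exactly the `k`-sets meeting `[α^(r-k+1)]`. -/
theorem stmt_1 (k r : ℕ) (hk : 1 ≤ k) (hkr : k ≤ r) :
    ∃ n₀ : ℕ, ∀ n, n₀ ≤ n → ∀ ℬ ⊆ ksets n (r - k + 1),
      IsIntersecting ℬ →
      interPts ℬ = Finset.Icc 1 (alpha (r - k + 1)) →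
      IsIntersecting ((ksets n r).filter fun A => ∃ B ∈ ℬ, B ⊆ A) ∧
      interk ((ksets n r).filter fun A => ∃ B ∈ ℬ, B ⊆ A) k =
        (ksets n k).filter fun C => (C ∩ Finset.Icc 1 (alpha (r - k + 1))).Nonempty :=
  stmt_1_general k r hkr
end

section
/- Let n ≥ 2r ≥ 2. Then β(n,r,r) = C(n−1, r−1), where C(·,·) denotes the binomial coefficient. Equivalently (Erdős–Ko–Rado): every intersecting family 𝒜 ⊆ [n]^(r) has |𝒜| ≤ C(n−1, r−1), and this bound is attained by the star 𝒜₁ = {A ∈ [n]^(r) : 1 ∈ A}. -/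
open Finset

lemma interk_self {n r : ℕ} {𝒜 : Finset (Finset ℕ)} (h : 𝒜 ⊆ ksets n r) :
    interk 𝒜 r = 𝒜 := by
  ext C
  simp only [interk, mem_filter, mem_image, mem_product, Prod.exists]
  constructor
  · rintro ⟨⟨A, B, ⟨hA, hB⟩, rfl⟩, hcard⟩
    have hAr : A.card = r := (mem_powersetCard.1 (h hA)).2
    have : A ∩ B = A := eq_of_subset_of_card_le inter_subset_left (by omega)
    rwa [this]
  · intro hC
    exact ⟨⟨C, C, ⟨hC, hC⟩, inter_self C⟩, (mem_powersetCard.1 (h hC)).2⟩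

lemma ekr_nat (n r : ℕ) (hr : 1 ≤ r) (hn : 2 * r ≤ n)
    {𝒜 : Finset (Finset ℕ)} (h𝒜 : 𝒜 ⊆ ksets n r) (hI : IsIntersecting 𝒜) :
    𝒜.card ≤ (n - 1).choose (r - 1) := by
  have hn0 : 0 < n := by omega
  set f : ℕ → Fin n := fun x => ⟨(x - 1) % n, Nat.mod_lt _ hn0⟩ with hf
  have hfval : ∀ x ∈ grd n, (f x : ℕ) = x - 1 := by
    intro x hx
    simp only [grd, mem_Icc] at hx
    simp [f, Nat.mod_eq_of_lt (by omega : x - 1 < n)]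
  set g : Fin n → ℕ := fun i => (i : ℕ) + 1 with hg
  have hgf : ∀ x ∈ grd n, g (f x) = x := by
    intro x hx
    have := hfval x hx
    simp only [grd, mem_Icc] at hx
    rw [show g (f x) = (f x : ℕ) + 1 from rfl, this]; omega
  have hsub : ∀ A ∈ 𝒜, A ⊆ grd n := fun A hA => (mem_powersetCard.1 (h𝒜 hA)).1
  have hrec : ∀ A ∈ 𝒜, (A.image f).image g = A := by
    intro A hA
    rw [image_image]
    ext x; simp only [mem_image, Function.comp_apply]
    constructor
    · rintro ⟨y, hy, rfl⟩; rwa [hgf y (hsub A hA hy)]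
    · intro hx; exact ⟨x, hx, hgf x (hsub A hA hx)⟩
  set 𝒜' : Finset (Finset (Fin n)) := 𝒜.image fun A => A.image f with h𝒜'
  have hcard : 𝒜'.card = 𝒜.card := by
    apply card_image_of_injOn
    intro A hA B hB hAB
    dsimp only at hAB
    rw [← hrec A hA, ← hrec B hB, hAB]
  have hsized : (𝒜' : Set (Finset (Fin n))).Sized r := by
    rintro A' hA'
    simp only [h𝒜', coe_image, Set.mem_image, mem_coe] at hA'
    obtain ⟨A, hA, rfl⟩ := hA'
    rw [card_image_of_injOn]
    · exact (mem_powersetCard.1 (h𝒜 hA)).2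
    · intro a ha b hb hab
      have := congrArg g hab
      rwa [hgf a (hsub A hA ha), hgf b (hsub A hA hb)] at this
  have hint : (𝒜' : Set (Finset (Fin n))).Intersecting := by
    rintro A' hA' B' hB' hdis
    simp only [h𝒜', coe_image, Set.mem_image, mem_coe] at hA' hB'
    obtain ⟨A, hA, rfl⟩ := hA'
    obtain ⟨B, hB, rfl⟩ := hB'
    obtain ⟨x, hx⟩ := hI A hA B hB
    simp only [mem_inter] at hx
    exact (Finset.disjoint_left.1 hdis (mem_image_of_mem f hx.1)) (mem_image_of_mem f hx.2)
  have := Finset.erdos_ko_rado hint hsized (Nat.le_div_iff_mul_le (by norm_num) |>.2 (by omega))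
  omega

lemma star_int (n r : ℕ) : IsIntersecting ((ksets n r).filter fun A => 1 ∈ A) := by
  intro A hA B hB
  simp only [mem_filter] at hA hB
  exact ⟨1, mem_inter.2 ⟨hA.2, hB.2⟩⟩

lemma star_card (n r : ℕ) (hr : 1 ≤ r) (hn : 2 * r ≤ n) :
    ((ksets n r).filter fun A => 1 ∈ A).card = (n - 1).choose (r - 1) := by
  have key : ((ksets n r).filter fun A => 1 ∈ A)
      = ((Icc 2 n).powersetCard (r - 1)).image (insert 1) := by
    ext A
    simp only [mem_filter, ksets, grd, mem_powersetCard, mem_image]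
    constructor
    · rintro ⟨⟨hsub, hcard⟩, h1⟩
      refine ⟨A.erase 1, ⟨fun x hx => ?_, ?_⟩, ?_⟩
      · have hx' := hsub (erase_subset _ _ hx)
        simp only [mem_erase] at hx
        simp only [mem_Icc] at hx' ⊢
        omega
      · rw [card_erase_of_mem h1, hcard]
      · exact insert_erase h1
    · rintro ⟨B, ⟨hBsub, hBcard⟩, rfl⟩
      have h1B : 1 ∉ B := fun h => by simpa using mem_Icc.1 (hBsub h)
      refine ⟨⟨?_, ?_⟩, mem_insert_self 1 B⟩
      · intro x hx
        rcases mem_insert.1 hx with rfl | hx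
        · simp [mem_Icc]; omega
        · have := mem_Icc.1 (hBsub hx); simp [mem_Icc]; omega
      · rw [card_insert_of_notMem h1B, hBcard]; omega
  rw [key, card_image_of_injOn, card_powersetCard, Nat.card_Icc]
  · rw [show n + 1 - 2 = n - 1 by omega]
  · intro A hA B hB hAB
    simp only [mem_coe, mem_powersetCard] at hA hB
    have h1A : 1 ∉ A := fun h => by simpa using mem_Icc.1 (hA.1 h)
    have h1B : 1 ∉ B := fun h => by simpa using mem_Icc.1 (hB.1 h)
    rw [← erase_insert h1A, hAB, erase_insert h1B]

/-- Erdős–Ko–Rado: for `n ≥ 2r ≥ 2`, `β(n,r,r) = C(n-1,r-1)`; every intersecting family of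
`r`-subsets of `[n]` has at most `C(n-1,r-1)` members, and the star of `1` attains this bound. -/
theorem stmt_11 (n r : ℕ) (hr : 1 ≤ r) (hn : 2 * r ≤ n) :
    beta n r r = (n - 1).choose (r - 1) ∧
    (∀ 𝒜 ⊆ ksets n r, IsIntersecting 𝒜 → 𝒜.card ≤ (n - 1).choose (r - 1)) ∧
    IsIntersecting ((ksets n r).filter fun A => 1 ∈ A) ∧
    ((ksets n r).filter fun A => 1 ∈ A).card = (n - 1).choose (r - 1) := by
  have hub : ∀ 𝒜 ⊆ ksets n r, IsIntersecting 𝒜 → 𝒜.card ≤ (n - 1).choose (r - 1) :=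
    fun 𝒜 h𝒜 hI => ekr_nat n r hr hn h𝒜 hI
  refine ⟨?_, hub, star_int n r, star_card n r hr hn⟩
  have hmem : (n - 1).choose (r - 1) ∈
      {m | ∃ 𝒜 ⊆ ksets n r, IsIntersecting 𝒜 ∧ (interk 𝒜 r).card = m} := by
    refine ⟨(ksets n r).filter fun A => 1 ∈ A, filter_subset _ _, star_int n r, ?_⟩
    rw [interk_self (filter_subset _ _), star_card n r hr hn]
  have hbdd : ∀ m ∈ {m | ∃ 𝒜 ⊆ ksets n r, IsIntersecting 𝒜 ∧ (interk 𝒜 r).card = m},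
      m ≤ (n - 1).choose (r - 1) := by
    rintro m ⟨𝒜, h𝒜, hI, rfl⟩
    rw [interk_self h𝒜]
    exact hub 𝒜 h𝒜 hI
  exact le_antisymm (csSup_le ⟨_, hmem⟩ hbdd) (le_csSup ⟨_, hbdd⟩ hmem)
end

section
/- Let 𝒟 = {{1,2,3},{1,4,5},{2,4,6},{3,5,6},{1,6,7},{2,5,7}} ⊆ [7]^(3), let ℰ = {E ∈ [n]^(4) : there exists D ∈ 𝒟 with D ⊆ E}, and let ℱ = ℰ ∪ {{1,2,5,8},{3,4,7,8}}. There exists n₀ such that for all n ≥ n₀: ℱ is intersecting and ℱ⟨2⟩ = {C ∈ [n]^(2) : C ∩ [7] ≠ ∅}. -/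
open Finset

/-- The family `𝒟 ⊆ [7]^(3)` from the Remarks section. -/
def famD : Finset (Finset ℕ) := {{1,2,3},{1,4,5},{2,4,6},{3,5,6},{1,6,7},{2,5,7}}

/-- `ℰ = {E ∈ [n]^(4) : ∃ D ∈ 𝒟, D ⊆ E}`. -/
def famE (n : ℕ) : Finset (Finset ℕ) := (ksets n 4).filter fun E => ∃ D ∈ famD, D ⊆ E

/-- `ℱ = ℰ ∪ {{1,2,5,8},{3,4,7,8}}`. -/
def famF (n : ℕ) : Finset (Finset ℕ) := famE n ∪ {{1,2,5,8},{3,4,7,8}}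

lemma famD_facts : ∀ D ∈ famD, D ⊆ Finset.Icc 1 7 ∧ D.card = 3 := by decide

lemma famD_inter : ∀ D ∈ famD, ∀ D' ∈ famD,
    (D ∩ D').Nonempty ∧ D ∩ D' ⊆ Finset.Icc 1 7 := by decide

lemma famD_e1 : ∀ D ∈ famD, (({1,2,5,8} : Finset ℕ) ∩ D).Nonempty := by decide
lemma famD_e2 : ∀ D ∈ famD, (({3,4,7,8} : Finset ℕ) ∩ D).Nonempty := by decide

lemma insert_mem_famE {n b : ℕ} {D : Finset ℕ} (hn : 7 ≤ n) (hD : D ∈ famD)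
    (hb1 : 1 ≤ b) (hbn : b ≤ n) (hbD : b ∉ D) : insert b D ∈ famE n := by
  obtain ⟨hsub, hcard⟩ := famD_facts D hD
  simp only [famE, mem_filter, ksets, grd, mem_powersetCard]
  refine ⟨⟨insert_subset (mem_Icc.mpr ⟨hb1, hbn⟩)
      (hsub.trans (Icc_subset_Icc_right hn)), ?_⟩, D, hD, subset_insert _ _⟩
  rw [card_insert_of_notMem hbD, hcard]

lemma mem_interk_of {𝒜 : Finset (Finset ℕ)} {A B C : Finset ℕ} (hA : A ∈ 𝒜) (hB : B ∈ 𝒜)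
    (hAB : A ∩ B = C) (hC : C.card = 2) : C ∈ interk 𝒜 2 := by
  simp only [interk, mem_filter, mem_image, mem_product]
  exact ⟨⟨(A, B), ⟨hA, hB⟩, hAB⟩, hC⟩

lemma insert_inter_insert' (b : ℕ) (s t : Finset ℕ) :
    insert b s ∩ insert b t = insert b (s ∩ t) := by
  ext x; simp only [mem_insert, mem_inter]; tauto

lemma insert_inter_mem {b : ℕ} {s t : Finset ℕ} (hb : b ∈ t) :
    insert b s ∩ t = insert b (s ∩ t) := by
  ext x
  simp only [mem_insert, mem_inter]
  constructor
  · rintro ⟨(rfl | hx), hxt⟩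
    · exact Or.inl rfl
    · exact Or.inr ⟨hx, hxt⟩
  · rintro (rfl | ⟨h1, h2⟩)
    · exact ⟨Or.inl rfl, hb⟩
    · exact ⟨Or.inr h1, h2⟩

lemma realize {n a b : ℕ} (hn : 9 ≤ n) {D D' : Finset ℕ} (hD : D ∈ famD) (hD' : D' ∈ famD)
    (hDD : D ∩ D' = {a}) (hb1 : 1 ≤ b) (hbn : b ≤ n) (hba : b ≠ a) :
    ({a, b} : Finset ℕ) ∈ interk (famF n) 2 := by
  have hDs := famD_facts D hD
  have hD's := famD_facts D' hD'
  have h7 : ∀ x ∈ D, x ≤ 7 := fun x hx => (mem_Icc.mp (hDs.1 hx)).2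
  have h7' : ∀ x ∈ D', x ≤ 7 := fun x hx => (mem_Icc.mp (hD's.1 hx)).2
  have hnD : n ∉ D := fun h => by have := h7 n h; omega
  have hnD' : n ∉ D' := fun h => by have := h7' n h; omega
  have hcard : ({a, b} : Finset ℕ).card = 2 := card_pair (Ne.symm hba)
  have hmemE : ∀ {X : Finset ℕ}, X ∈ famE n → X ∈ famF n := fun h =>
    mem_union_left _ h
  by_cases hbD : b ∈ D <;> by_cases hbD' : b ∈ D'
  · exfalso
    apply hba
    have : b ∈ D ∩ D' := mem_inter.mpr ⟨hbD, hbD'⟩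
    rw [hDD] at this
    simpa using this
  · -- b ∈ D, b ∉ D' : use A = insert n D, B = insert b D'
    have hb7 : b ≤ 7 := h7 b hbD
    refine mem_interk_of (hmemE (insert_mem_famE (by omega) hD (by omega) le_rfl hnD))
      (hmemE (insert_mem_famE (by omega) hD' hb1 hbn hbD')) ?_ hcard
    have h1 : n ∉ insert b D' := by
      simp only [mem_insert]
      rintro (rfl | h)
      · omega
      · exact hnD' h
    rw [insert_inter_of_notMem h1, inter_comm, insert_inter_mem hbD, inter_comm D' D, hDD]
    exact pair_comm b a
  · -- b ∉ D, b ∈ D' : use A = insert b D, B = insert n D'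
    have hb7 : b ≤ 7 := h7' b hbD'
    refine mem_interk_of (hmemE (insert_mem_famE (by omega) hD hb1 hbn hbD))
      (hmemE (insert_mem_famE (by omega) hD' (by omega) le_rfl hnD')) ?_ hcard
    have h1 : n ∉ insert b D := by
      simp only [mem_insert]
      rintro (rfl | h)
      · omega
      · exact hnD h
    rw [inter_insert_of_notMem h1, insert_inter_mem hbD', hDD]
    exact pair_comm b a
  · -- b ∉ D ∪ D'
    refine mem_interk_of (hmemE (insert_mem_famE (by omega) hD hb1 hbn hbD))
      (hmemE (insert_mem_famE (by omega) hD' hb1 hbn hbD')) ?_ hcard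
    rw [insert_inter_insert', hDD]
    exact pair_comm b a

lemma pairlemma {n a b : ℕ} (hn : 9 ≤ n) (ha : a ∈ Finset.Icc 1 7)
    (hb1 : 1 ≤ b) (hbn : b ≤ n) (hba : b ≠ a) :
    ({a, b} : Finset ℕ) ∈ interk (famF n) 2 := by
  rw [mem_Icc] at ha
  obtain ⟨ha1, ha7⟩ := ha
  interval_cases a
  · exact realize hn (D := {1,2,3}) (D' := {1,4,5}) (by decide) (by decide) (by decide) hb1 hbn hba
  · exact realize hn (D := {1,2,3}) (D' := {2,4,6}) (by decide) (by decide) (by decide) hb1 hbn hba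
  · exact realize hn (D := {1,2,3}) (D' := {3,5,6}) (by decide) (by decide) (by decide) hb1 hbn hba
  · exact realize hn (D := {1,4,5}) (D' := {2,4,6}) (by decide) (by decide) (by decide) hb1 hbn hba
  · exact realize hn (D := {1,4,5}) (D' := {3,5,6}) (by decide) (by decide) (by decide) hb1 hbn hba
  · exact realize hn (D := {2,4,6}) (D' := {3,5,6}) (by decide) (by decide) (by decide) hb1 hbn hba
  · exact realize hn (D := {1,6,7}) (D' := {2,5,7}) (by decide) (by decide) (by decide) hb1 hbn hba

lemma two_card_meets {C S : Finset ℕ} (hCS : C ⊆ S)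
    (hS : ∀ x ∈ S, x ∈ Finset.Icc 1 7 ∨ x = 8) (h2 : C.card = 2) :
    (C ∩ Finset.Icc 1 7).Nonempty := by
  by_contra h
  have hsub : C ⊆ {8} := by
    intro x hx
    rcases hS x (hCS hx) with h7 | rfl
    · exact absurd ⟨x, mem_inter.mpr ⟨hx, h7⟩⟩ h
    · exact mem_singleton_self _
  have := card_le_card hsub
  simp [h2] at this

lemma e_facts : ∀ x ∈ ({1,2,5,8} : Finset ℕ), x ∈ Finset.Icc 1 7 ∨ x = 8 := by decide
lemma e_facts' : ∀ x ∈ ({3,4,7,8} : Finset ℕ), x ∈ Finset.Icc 1 7 ∨ x = 8 := by decide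

lemma famF_mem_cases {n : ℕ} {X : Finset ℕ} (hX : X ∈ famF n) :
    X ∈ famE n ∨ X = {1,2,5,8} ∨ X = {3,4,7,8} := by
  have := hX
  simp only [famF, mem_union, mem_insert, mem_singleton] at this
  tauto

lemma famF_subset {n : ℕ} (hn : 8 ≤ n) {X : Finset ℕ} (hX : X ∈ famF n) :
    X ⊆ Finset.Icc 1 n := by
  rcases famF_mem_cases hX with h | rfl | rfl
  · exact (mem_powersetCard.mp (mem_filter.mp h).1).1
  · intro x hx
    simp only [mem_insert, mem_singleton] at hx
    rw [mem_Icc]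
    rcases hx with rfl | rfl | rfl | rfl <;> omega
  · intro x hx
    simp only [mem_insert, mem_singleton] at hx
    rw [mem_Icc]
    rcases hx with rfl | rfl | rfl | rfl <;> omega

/-- For `n` large, `ℱ` is intersecting and `ℱ⟨2⟩` consists of all `2`-subsets of `[n]`
meeting `[7]`. -/
theorem stmt_14 :
    ∃ n₀ : ℕ, ∀ n, n₀ ≤ n →
      IsIntersecting (famF n) ∧
      interk (famF n) 2 = (ksets n 2).filter fun C => (C ∩ Finset.Icc 1 7).Nonempty := by
  refine ⟨9, fun n hn => ⟨?_, ?_⟩⟩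
  · -- intersecting
    intro A hA B hB
    have getD : ∀ X ∈ famE n, ∃ D ∈ famD, D ⊆ X := fun X hX => (mem_filter.mp hX).2
    rcases famF_mem_cases hA with hAE | rfl | rfl <;>
      rcases famF_mem_cases hB with hBE | rfl | rfl
    · obtain ⟨D, hD, hDA⟩ := getD A hAE
      obtain ⟨D', hD', hDB⟩ := getD B hBE
      exact (famD_inter D hD D' hD').1.mono (inter_subset_inter hDA hDB)
    · obtain ⟨D, hD, hDA⟩ := getD A hAE
      have := famD_e1 D hD
      rw [inter_comm] at this
      exact this.mono (inter_subset_inter hDA Subset.rfl)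
    · obtain ⟨D, hD, hDA⟩ := getD A hAE
      have := famD_e2 D hD
      rw [inter_comm] at this
      exact this.mono (inter_subset_inter hDA Subset.rfl)
    · obtain ⟨D, hD, hDB⟩ := getD B hBE
      exact (famD_e1 D hD).mono (inter_subset_inter Subset.rfl hDB)
    · exact ⟨1, by decide⟩
    · exact ⟨8, by decide⟩
    · obtain ⟨D, hD, hDB⟩ := getD B hBE
      exact (famD_e2 D hD).mono (inter_subset_inter Subset.rfl hDB)
    · exact ⟨8, by decide⟩
    · exact ⟨3, by decide⟩
  · -- the intersection structure
    ext C
    simp only [mem_filter, ksets, grd, mem_powersetCard]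
    constructor
    · intro hC
      simp only [interk, mem_filter, mem_image, mem_product] at hC
      obtain ⟨⟨⟨A, B⟩, ⟨hA, hB⟩, rfl⟩, hcard⟩ := hC
      have hsubn : A ∩ B ⊆ Finset.Icc 1 n :=
        (inter_subset_left).trans (famF_subset (by omega) hA)
      refine ⟨⟨hsubn, hcard⟩, ?_⟩
      rcases famF_mem_cases hA with hAE | rfl | rfl
      · rcases famF_mem_cases hB with hBE | rfl | rfl
        · obtain ⟨D, hD, hDA⟩ := (mem_filter.mp hAE).2
          obtain ⟨D', hD', hDB⟩ := (mem_filter.mp hBE).2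
          obtain ⟨hne, hsub7⟩ := famD_inter D hD D' hD'
          exact hne.mono (subset_inter (inter_subset_inter hDA hDB) hsub7)
        · exact two_card_meets inter_subset_right e_facts hcard
        · exact two_card_meets inter_subset_right e_facts' hcard
      · exact two_card_meets inter_subset_left e_facts hcard
      · exact two_card_meets inter_subset_left e_facts' hcard
    · rintro ⟨⟨hsub, hcard⟩, ⟨a, ha⟩⟩
      rw [mem_inter] at ha
      obtain ⟨haC, ha7⟩ := ha
      obtain ⟨x, y, hxy, rfl⟩ := card_eq_two.mp hcard
      have hx : x ∈ Finset.Icc 1 n := hsub (mem_insert_self _ _)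
      have hy : y ∈ Finset.Icc 1 n := hsub (by simp)
      rw [mem_Icc] at hx hy
      rcases mem_insert.mp haC with rfl | h
      · exact pairlemma hn ha7 hy.1 hy.2 (Ne.symm hxy)
      · rw [mem_singleton] at h
        subst h
        rw [pair_comm]
        exact pairlemma hn ha7 hx.1 hx.2 hxy
end
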